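/- Let F_q be a finite field of odd order q and let j ∈ F_q. Then for every m ∈ F_q^2, Ŝ_j(m) = q^{-1} δ_0(m) + q^{-3} G^2 Σ_{r ∈ F_q^*} χ( j r + ||m||/(4r) ), where δ_0(m) = 1 if m = (0,0) and δ_0(m) = 0 otherwise, η is the quadratic character of F_q^*, and G = Σ_{s ∈ F_q^*} η(s) χ(s) is the Gauss sum. -/

import Mathlib

/-!
Expand the indicator of `S_j` by orthogonality, `q · 1[‖x‖ = j] = Σ_r χ (r (j - ‖x‖))`, and
swap the sums. The frequency `r = 0` contributes the delta at `m = 0`. For `r ≠ 0` the sum over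
`x` splits into two one-variable sums `Σ_t χ (a t² + b t)`; completing the square and counting
square roots with the quadratic character `η` evaluates each as `χ (-b² / 4a) η(a) G`, and
`η(a)² = 1`.
-/

open Finset

/-- `‖x‖ = x₁² + x₂²` for `x ∈ F_q²`. -/
def nrm {F : Type} [Field F] (x : F × F) : F := x.1 ^ 2 + x.2 ^ 2

/-- Fourier transform `f̂(m) = q⁻² Σ_x f(x) χ(-x·m)`. -/
noncomputable def ft {F : Type} [Field F] [Fintype F] (χ : AddChar F ℂ)
    (f : F × F → ℂ) (m : F × F) : ℂ :=
  (1 / (Fintype.card F : ℂ) ^ 2) *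
    ∑ x : F × F, f x * χ (-(x.1 * m.1 + x.2 * m.2))

/-- Indicator function of a finite set of points. -/
def ind {F : Type} [Field F] [DecidableEq F] (A : Finset (F × F)) :
    F × F → ℂ :=
  fun x => if x ∈ A then 1 else 0

/-- The sphere `S_j = {x : ‖x‖ = j}` as a finset. -/
def sphere {F : Type} [Field F] [Fintype F] [DecidableEq F] (j : F) :
    Finset (F × F) :=
  univ.filter (fun x => nrm x = j)

/-- The Gauss sum `G = Σ_{s ≠ 0} η(s) χ(s)` attached to the quadratic character
`η` and the additive character `χ`. -/
noncomputable def gaussSum' {F : Type} [Field F] [Fintype F] [DecidableEq F]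
    (χ : AddChar F ℂ) : ℂ :=
  ∑ s ∈ univ.filter (fun s : F => s ≠ 0), ((quadraticChar F s : ℤ) : ℂ) * χ s

open AddChar

section QuadraticSums

variable {F : Type} [Field F] [Fintype F] [DecidableEq F] {R : Type*} [CommRing R]

variable (F R) in
def quadraticCharIn : MulChar F R := (quadraticChar F).ringHomComp (Int.castRingHom R)

variable (R) in
@[simp]
lemma quadraticCharIn_apply (a : F) : quadraticCharIn F R a = quadraticChar F a := rfl

lemma quadraticCharIn_sq {a : F} (ha : a ≠ 0) : quadraticCharIn F R a ^ 2 = 1 := by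
  rw [quadraticCharIn_apply, ← Int.cast_pow, quadraticChar_sq_one ha, Int.cast_one]

variable [IsDomain R] {ψ : AddChar F R}

lemma sum_addChar_mul_sq (hF : ringChar F ≠ 2) (hψ : ψ.IsPrimitive) {a : F} (ha : a ≠ 0) :
    ∑ t : F, ψ (a * t ^ 2) = quadraticCharIn F R a * gaussSum (quadraticCharIn F R) ψ := by
  have hfibre : ∀ s : F, ∑ t with t ^ 2 = s, ψ (a * t ^ 2)
      = (quadraticCharIn F R s + 1) * ψ (a * s) := by
    intro s
    rw [sum_congr rfl fun t ht => by rw [(mem_filter.mp ht).2], sum_const, nsmul_eq_mul]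
    have hcard : (#{t : F | t ^ 2 = s} : ℤ) = quadraticChar F s + 1 := by
      simpa using quadraticChar_card_sqrts hF s
    rw [quadraticCharIn_apply]
    congr 1
    rw [← Int.cast_natCast, hcard, Int.cast_add, Int.cast_one]
  calc ∑ t : F, ψ (a * t ^ 2)
      = ∑ s : F, (quadraticCharIn F R s + 1) * ψ (a * s) := by
        rw [← sum_fiberwise univ (fun t : F => t ^ 2)]
        exact sum_congr rfl fun s _ => hfibre s
    _ = gaussSum (quadraticCharIn F R) (ψ.mulShift a) + ∑ s : F, ψ (s * a) := by
        simp only [add_mul, one_mul, sum_add_distrib, gaussSum, mulShift_apply, mul_comm a]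
    _ = quadraticCharIn F R a * gaussSum (quadraticCharIn F R) ψ := by
        have hη : (quadraticCharIn F R)⁻¹ = quadraticCharIn F R :=
          ((quadraticChar_isQuadratic F).comp _).inv
        rw [sum_mulShift a hψ, if_neg ha, Nat.cast_zero, add_zero,
          show a = (Units.mk0 a ha : F) from rfl, gaussSum_mulShift_eq, hη]

lemma sum_addChar_quadratic (hF : ringChar F ≠ 2) (hψ : ψ.IsPrimitive) {a : F} (ha : a ≠ 0)
    (b : F) : ∑ t : F, ψ (a * t ^ 2 + b * t)
      = ψ (-b ^ 2 / (4 * a)) * (quadraticCharIn F R a * gaussSum (quadraticCharIn F R) ψ) := by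
  have h2 : (2 : F) ≠ 0 := Ring.two_ne_zero hF
  have h4 : (4 : F) ≠ 0 := by simpa [two_mul, ← two_add_two_eq_four] using mul_ne_zero h2 h2
  -- complete the square: `a t² + b t = a (t + b / 2a)² - b² / 4a`
  have hsquare :
      ∑ t : F, ψ (a * t ^ 2 + b * t) = ∑ t : F, ψ (a * t ^ 2 + -b ^ 2 / (4 * a)) :=
    (Fintype.sum_equiv (Equiv.subRight (b / (2 * a))) _ _ fun t => by
      rw [Equiv.subRight_apply]; congr 1; field_simp; ring).symm
  rw [hsquare]
  simp only [map_add_eq_mul]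
  rw [← sum_mul, sum_addChar_mul_sq hF hψ ha, mul_comm]

lemma sum_addChar_dot (hψ : ψ.IsPrimitive) (b : F × F) :
    ∑ x : F × F, ψ (x.1 * b.1 + x.2 * b.2) = if b = 0 then (Fintype.card F : R) ^ 2 else 0 := by
  simp only [Fintype.sum_prod_type, map_add_eq_mul, ← Fintype.sum_mul_sum, sum_mulShift _ hψ]
  by_cases h1 : b.1 = 0 <;> by_cases h2 : b.2 = 0 <;> simp [h1, h2, Prod.ext_iff, sq]

lemma sum_addChar_mul_nrm_add_dot (hF : ringChar F ≠ 2) (hψ : ψ.IsPrimitive) {a : F}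
    (ha : a ≠ 0) (b : F × F) :
    ∑ x : F × F, ψ (a * nrm x + (x.1 * b.1 + x.2 * b.2))
      = ψ (-nrm b / (4 * a)) * gaussSum (quadraticCharIn F R) ψ ^ 2 := by
  have hsplit : ∀ x : F × F, ψ (a * nrm x + (x.1 * b.1 + x.2 * b.2))
      = ψ (a * x.1 ^ 2 + b.1 * x.1) * ψ (a * x.2 ^ 2 + b.2 * x.2) := fun x => by
    rw [← map_add_eq_mul, nrm]; congr 1; ring
  simp only [hsplit]
  rw [Fintype.sum_prod_type]
  dsimp only
  rw [← Fintype.sum_mul_sum, sum_addChar_quadratic hF hψ ha,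
    sum_addChar_quadratic hF hψ ha]
  calc _ = ψ (-b.1 ^ 2 / (4 * a) + -b.2 ^ 2 / (4 * a)) * quadraticCharIn F R a ^ 2
        * gaussSum (quadraticCharIn F R) ψ ^ 2 := by rw [map_add_eq_mul]; ring
    _ = _ := by rw [quadraticCharIn_sq ha, mul_one, nrm]; congr 2; ring

lemma sum_sum_addChar_mul_sub_nrm (hF : ringChar F ≠ 2) (hψ : ψ.IsPrimitive) (j : F)
    (m : F × F) :
    ∑ r : F, ∑ x : F × F, ψ (r * (j - nrm x) - (x.1 * m.1 + x.2 * m.2))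
      = (if m = 0 then (Fintype.card F : R) ^ 2 else 0)
        + gaussSum (quadraticCharIn F R) ψ ^ 2 *
          ∑ r with r ≠ 0, ψ (j * r + nrm m / (4 * r)) := by
  rw [filter_ne', ← add_sum_erase _ _ (mem_univ 0), mul_sum]
  congr 1
  · have hzero : ∀ x : F × F, ψ (0 * (j - nrm x) - (x.1 * m.1 + x.2 * m.2))
        = ψ (x.1 * (-m).1 + x.2 * (-m).2) := fun x => by
      congr 1; simp only [Prod.fst_neg, Prod.snd_neg]; ring
    simp only [hzero, sum_addChar_dot hψ, neg_eq_zero]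
  · refine sum_congr rfl fun r hr => ?_
    have hneg : -r ≠ 0 := neg_ne_zero.mpr (ne_of_mem_erase hr)
    calc ∑ x : F × F, ψ (r * (j - nrm x) - (x.1 * m.1 + x.2 * m.2))
        = ψ (j * r) * ∑ x : F × F, ψ (-r * nrm x + (x.1 * (-m).1 + x.2 * (-m).2)) := by
          rw [mul_sum]; refine sum_congr rfl fun x _ => ?_; rw [← map_add_eq_mul]
          congr 1; simp only [Prod.fst_neg, Prod.snd_neg]; ring
      _ = _ := by
          rw [sum_addChar_mul_nrm_add_dot hF hψ hneg, ← mul_assoc, ← map_add_eq_mul, mul_comm]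
          congr 2; simp only [nrm, Prod.fst_neg, Prod.snd_neg]; field_simp

end QuadraticSums

lemma gaussSum'_eq_gaussSum {F : Type} [Field F] [Fintype F] [DecidableEq F] (χ : AddChar F ℂ) :
    gaussSum' χ = gaussSum (quadraticCharIn F ℂ) χ :=
  sum_filter_of_ne fun s _ hs h0 => hs (by simp [h0])

theorem sphere_fourier_formula
    {F : Type} [Field F] [Fintype F] [DecidableEq F]
    (hq : Odd (Fintype.card F)) (χ : AddChar F ℂ) (hχ : χ ≠ 1)
    (j : F) (m : F × F) :
    ft χ (ind (sphere j)) m =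
      (Fintype.card F : ℂ)⁻¹ * (if m = 0 then 1 else 0) +
        (Fintype.card F : ℂ)⁻¹ ^ 3 * gaussSum' χ ^ 2 *
          ∑ r ∈ univ.filter (fun r : F => r ≠ 0),
            χ (j * r + nrm m / (4 * r)) := by
  have hF : ringChar F ≠ 2 := fun h =>
    Nat.not_odd_iff_even.mpr (Nat.even_iff.mpr (FiniteField.even_card_iff_char_two.mp h)) hq
  have hψ : χ.IsPrimitive := IsPrimitive.of_ne_one hχ
  have hq0 : (Fintype.card F : ℂ) ≠ 0 := Nat.cast_ne_zero.mpr Fintype.card_ne_zero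
  have hind :
      ∀ x, ind (sphere j) x = (Fintype.card F : ℂ)⁻¹ * ∑ r : F, χ (r * (j - nrm x)) := by
    intro x
    rw [ind, sphere, sum_mulShift _ hψ]
    simp only [mem_filter, mem_univ, true_and, sub_eq_zero, eq_comm]
    split_ifs <;> simp [hq0]
  have hswap : ∑ x : F × F, ind (sphere j) x * χ (-(x.1 * m.1 + x.2 * m.2))
      = (Fintype.card F : ℂ)⁻¹ *
          ∑ r : F, ∑ x : F × F, χ (r * (j - nrm x) - (x.1 * m.1 + x.2 * m.2)) := by
    simp_rw [hind, mul_assoc, ← mul_sum, sum_mul, ← map_add_eq_mul, ← sub_eq_add_neg]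
    rw [sum_comm]
  rw [ft, hswap, sum_sum_addChar_mul_sub_nrm hF hψ, gaussSum'_eq_gaussSum]
  split_ifs
  · field_simp
  · simp only [mul_zero, zero_add]
    ring
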